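/- arXiv:2306.10381 — 2 statements merged into one kernel-verified Lean document; each statement's English description precedes it below -/
import Mathlib

section
/- For every K ∈ ℕ there does not exist a sequence (wₙ)ₙ of ℝ-words over X = {a, b} such that for every n ≥ 1 the evaluation of wₙ equals gₙ = ((n, 0), 0, 0) and k(wₙ) ≤ K, and such that (ℓ(wₙ) − n)/n tends to 0 as n → ∞. -/
noncomputable section

/-- The Engel Lie group `Ē`: underlying set `ℝ² × ℝ × ℝ`, with coordinates
`(x, y)` (endpoint), `A` (signed area) and `B` (the `y`-moment). -/
@[ext]
structure Engel where
  x : ℝ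
  y : ℝ
  A : ℝ
  B : ℝ

namespace Engel

instance : Mul Engel :=
  ⟨fun g h =>
    ⟨g.x + h.x, g.y + h.y,
     g.A + h.A + (g.x * h.y - g.y * h.x) / 2,
     g.B + h.B + g.y * h.A + (2 * g.y + h.y) * (g.x * h.y - g.y * h.x) / 6⟩⟩

instance : One Engel := ⟨⟨0, 0, 0, 0⟩⟩

instance : Inv Engel := ⟨fun g => ⟨-g.x, -g.y, -g.A, -g.B + g.y * g.A⟩⟩

@[simp] lemma mul_x (g h : Engel) : (g * h).x = g.x + h.x := rfl
@[simp] lemma mul_y (g h : Engel) : (g * h).y = g.y + h.y := rfl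
@[simp] lemma mul_A (g h : Engel) :
    (g * h).A = g.A + h.A + (g.x * h.y - g.y * h.x) / 2 := rfl
@[simp] lemma mul_B (g h : Engel) :
    (g * h).B = g.B + h.B + g.y * h.A
      + (2 * g.y + h.y) * (g.x * h.y - g.y * h.x) / 6 := rfl
@[simp] lemma one_x : (1 : Engel).x = 0 := rfl
@[simp] lemma one_y : (1 : Engel).y = 0 := rfl
@[simp] lemma one_A : (1 : Engel).A = 0 := rfl
@[simp] lemma one_B : (1 : Engel).B = 0 := rfl
@[simp] lemma inv_x (g : Engel) : g⁻¹.x = -g.x := rfl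
@[simp] lemma inv_y (g : Engel) : g⁻¹.y = -g.y := rfl
@[simp] lemma inv_A (g : Engel) : g⁻¹.A = -g.A := rfl
@[simp] lemma inv_B (g : Engel) : g⁻¹.B = -g.B + g.y * g.A := rfl

instance : Group Engel where
  mul_assoc a b c := by ext <;> simp <;> ring
  one_mul a := by ext <;> simp
  mul_one a := by ext <;> simp
  inv_mul_cancel a := by
    ext <;>
      simp only [mul_x, mul_y, mul_A, mul_B, inv_x, inv_y, inv_A, inv_B,
        one_x, one_y, one_A, one_B] <;> ring

/-- `a^t`: the straight segment from `(0,0)` to `(t,t)`. -/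
def aPow (t : ℝ) : Engel := ⟨t, t, 0, 0⟩

/-- `b^t`: the straight segment from `(0,0)` to `(t,-t)`. -/
def bPow (t : ℝ) : Engel := ⟨t, -t, 0, 0⟩

end Engel

namespace Engel

/-- An ℝ-word over `X = {a, b}` is a finite sequence of pairs `(xᵢ, tᵢ)` with
`xᵢ ∈ {a, b}` (encoded as `Bool`: `true ↦ a`, `false ↦ b`) and `tᵢ ∈ ℝ`.
Its evaluation is the product `x₁^{t₁}·…·x_k^{t_k}` in `Ē`. -/
def wordEval (w : List (Bool × ℝ)) : Engel :=
  (w.map fun p => if p.1 then aPow p.2 else bPow p.2).prod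

/-- The length `ℓ(w) = Σᵢ |tᵢ|` of an ℝ-word. -/
def wordLen (w : List (Bool × ℝ)) : ℝ := (w.map fun p => |p.2|).sum

end Engel

/-!
Read an ℝ-word as a polygonal path in the plane made of segments of slope `±1`, each advancing
`x` by `tᵢ`. The `B`-coordinate of its evaluation is `x y² / 6 - ∫ y²/2 dx`, so a word evaluating
to `gₙ` has `∫ y²/2 dx = 0`. If it has at most `K` segments, one of them advances `x` by at least
`n / K` and contributes at least `(n / K)³ / 24` to the integral. Only the segments running
backwards contribute negatively; their total length is `(ℓ - n) / 2` and `|y| ≤ ℓ` throughout,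
so for `ℓ ≤ 2n` this forces `ℓ - n ≥ n / (24 K³)`, and `(ℓ - n) / n` stays away from `0`.
-/

namespace Engel

def slope (b : Bool) : ℝ := if b then 1 else -1

def letter (p : Bool × ℝ) : Engel := if p.1 then aPow p.2 else bPow p.2

lemma letter_eq (p : Bool × ℝ) : letter p = ⟨p.2, slope p.1 * p.2, 0, 0⟩ := by
  rcases p with ⟨_ | _, t⟩ <;> simp [letter, slope, aPow, bPow]

lemma wordEval_nil : wordEval [] = 1 := rfl

lemma wordEval_cons (p : Bool × ℝ) (w : List (Bool × ℝ)) :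
    wordEval (p :: w) = letter p * wordEval w := by
  simp [wordEval, letter]

lemma wordLen_cons (p : Bool × ℝ) (w : List (Bool × ℝ)) :
    wordLen (p :: w) = |p.2| + wordLen w := by
  simp [wordLen]

lemma wordLen_nonneg (w : List (Bool × ℝ)) : 0 ≤ wordLen w :=
  List.sum_nonneg fun _ hx => by
    obtain ⟨p, -, rfl⟩ := List.mem_map.1 hx
    exact abs_nonneg _

lemma wordEval_x (w : List (Bool × ℝ)) : (wordEval w).x = (w.map Prod.snd).sum := by
  induction w with
  | nil => rfl
  | cons p w ih => simp [wordEval_cons, letter_eq, ih]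

/-- `∫ y dx` along the path of `w` started at height `c`. -/
def areaFrom : ℝ → List (Bool × ℝ) → ℝ
  | _, [] => 0
  | c, (b, t) :: w => t * (2 * c + slope b * t) / 2 + areaFrom (c + slope b * t) w

/-- `∫ y²/2 dx` along the path of `w` started at height `c`. -/
def momentFrom : ℝ → List (Bool × ℝ) → ℝ
  | _, [] => 0
  | c, (b, t) :: w =>
      t * (c ^ 2 + c * (c + slope b * t) + (c + slope b * t) ^ 2) / 6 +
        momentFrom (c + slope b * t) w

def yShift (c : ℝ) : Engel := ⟨0, c, 0, 0⟩

/-- Left translation by `yShift c` starts the path at height `c`; this makes the induction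
over the word uniform. -/
lemma yShift_mul_wordEval (c : ℝ) (w : List (Bool × ℝ)) :
    (yShift c * wordEval w).A =
        (yShift c * wordEval w).x * (yShift c * wordEval w).y / 2 - areaFrom c w ∧
      (yShift c * wordEval w).B =
        (yShift c * wordEval w).x * (yShift c * wordEval w).y ^ 2 / 6 - momentFrom c w := by
  induction w generalizing c with
  | nil => simp [wordEval_nil, yShift, areaFrom, momentFrom]
  | cons p w ih =>
    obtain ⟨b, t⟩ := p
    set c' := c + slope b * t
    have hsplit : yShift c * wordEval ((b, t) :: w) =
        (yShift c * letter (b, t) * (yShift c')⁻¹) * (yShift c' * wordEval w) := by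
      rw [wordEval_cons]; group
    obtain ⟨hA, hB⟩ := ih c'
    rw [hsplit]
    generalize yShift c' * wordEval w = h at hA hB
    simp only [mul_x, mul_y, mul_A, mul_B, inv_x, inv_y, inv_A, inv_B, letter_eq, yShift,
      areaFrom, momentFrom, hA, hB]
    constructor <;> ring

lemma momentFrom_zero_eq_zero {w : List (Bool × ℝ)} {n : ℝ}
    (hw : wordEval w = ⟨n, 0, 0, 0⟩) : momentFrom 0 w = 0 := by
  have hB := (yShift_mul_wordEval 0 w).2
  rw [show yShift 0 = 1 from rfl, one_mul, hw] at hB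
  simpa using hB

lemma segment_moment_ge {c d t M : ℝ} (hd : d ^ 2 = t ^ 2) (hM : |c| + |t| ≤ M) :
    max t 0 ^ 3 / 24 + M ^ 2 * (t - |t|) / 4 ≤ t * (c ^ 2 + c * (c + d) + (c + d) ^ 2) / 6 := by
  rcases le_or_gt 0 t with ht | ht
  · rw [max_eq_left ht, abs_of_nonneg ht, sub_self, mul_zero, zero_div, add_zero]
    have hq : t ^ 2 ≤ 4 * (c ^ 2 + c * (c + d) + (c + d) ^ 2) := by
      nlinarith [sq_nonneg (2 * c + d)]
    nlinarith [mul_le_mul_of_nonneg_left hq ht]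
  · rw [max_eq_right ht.le, abs_of_neg ht]
    have hdt : |d| = |t| := sq_eq_sq_iff_abs_eq_abs _ _ |>.1 hd
    have hc : |c| ≤ M := by linarith [abs_nonneg t]
    have hcd : |c + d| ≤ M := (abs_add_le c d).trans (by linarith)
    have hq : c ^ 2 + c * (c + d) + (c + d) ^ 2 ≤ 3 * M ^ 2 := by
      obtain ⟨h1, h2⟩ := abs_le.1 hc
      obtain ⟨h3, h4⟩ := abs_le.1 hcd
      nlinarith
    nlinarith

/-- Only backward segments lower the moment, each by at most `M²/2` per unit of length, while
a forward segment of length `t` raises it by at least `t³/24`. -/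
lemma momentFrom_ge (M : ℝ) (w : List (Bool × ℝ)) (c : ℝ) (hM : |c| + wordLen w ≤ M) :
    (w.map fun p => max p.2 0 ^ 3).sum / 24 - M ^ 2 / 4 * (wordLen w - (w.map Prod.snd).sum)
      ≤ momentFrom c w := by
  induction w generalizing c with
  | nil => simp [wordLen, momentFrom]
  | cons p w ih =>
    obtain ⟨b, t⟩ := p
    rw [wordLen_cons] at hM ⊢
    have hslope : (slope b * t) ^ 2 = t ^ 2 := by cases b <;> simp [slope]
    have hhead := segment_moment_ge (c := c) hslope (M := M) (by linarith [wordLen_nonneg w])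
    have htail := ih (c + slope b * t) <| by
      have : |c + slope b * t| ≤ |c| + |t| := by
        simpa [abs_mul, show |slope b| = 1 by cases b <;> simp [slope]] using
          abs_add_le c (slope b * t)
      linarith
    simp only [List.map_cons, List.sum_cons, momentFrom]
    linarith

lemma exists_segment_ge {w : List (Bool × ℝ)} {K : ℕ} {n : ℝ} (hn : 0 < n)
    (hK : w.length ≤ K) (hsum : (w.map Prod.snd).sum = n) : ∃ p ∈ w, n / K ≤ p.2 := by
  have hne : w ≠ [] := by rintro rfl; simp [← hsum] at hn
  have hK0 : (0 : ℝ) < K := by exact_mod_cast (List.length_pos_iff.2 hne).trans_le hK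
  refine List.exists_le_of_sum_le hne (fun _ => n / K) Prod.snd ?_
  rw [List.map_const', List.sum_replicate, nsmul_eq_mul, hsum]
  calc w.length * (n / K) ≤ K * (n / K) := by gcongr
    _ = n := mul_div_cancel₀ n hK0.ne'

lemma excess_ge {w : List (Bool × ℝ)} {K : ℕ} {n : ℝ} (hn : 0 < n) (hK : w.length ≤ K)
    (hw : wordEval w = ⟨n, 0, 0, 0⟩) (hL : wordLen w ≤ 2 * n) :
    n / (24 * K ^ 3) ≤ wordLen w - n := by
  have hsum : (w.map Prod.snd).sum = n := by rw [← wordEval_x, hw]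
  obtain ⟨p, hp, hpn⟩ := exists_segment_ge hn hK hsum
  have hcube : (n / K) ^ 3 ≤ (w.map fun p => max p.2 0 ^ 3).sum :=
    calc (n / K) ^ 3 ≤ max p.2 0 ^ 3 := by gcongr; exact hpn.trans (le_max_left _ _)
      _ ≤ _ := List.single_le_sum
          (fun _ hx => by obtain ⟨q, -, rfl⟩ := List.mem_map.1 hx; positivity)
          _ (List.mem_map_of_mem (f := fun p : Bool × ℝ => max p.2 0 ^ 3) hp)
  have hmom := momentFrom_ge (2 * n) w 0 (by simpa using hL)
  rw [momentFrom_zero_eq_zero hw, hsum] at hmom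
  refine le_of_mul_le_mul_left ?_ (pow_pos hn 2)
  calc n ^ 2 * (n / (24 * K ^ 3)) = (n / K) ^ 3 / 24 := by ring
    _ ≤ n ^ 2 * (wordLen w - n) := by linarith

lemma min_le_excess_ratio {w : List (Bool × ℝ)} {K : ℕ} {n : ℝ} (hn : 0 < n)
    (hK : w.length ≤ K) (hw : wordEval w = ⟨n, 0, 0, 0⟩) :
    min 1 (1 / (24 * (K : ℝ) ^ 3)) ≤ (wordLen w - n) / n := by
  rw [le_div_iff₀ hn]
  rcases le_or_gt (wordLen w) (2 * n) with hL | hL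
  · calc min 1 (1 / (24 * (K : ℝ) ^ 3)) * n ≤ 1 / (24 * K ^ 3) * n := by
          gcongr; exact min_le_right _ _
      _ = n / (24 * K ^ 3) := by ring
      _ ≤ wordLen w - n := excess_ge hn hK hw hL
  · nlinarith [min_le_left (1 : ℝ) (1 / (24 * (K : ℝ) ^ 3))]

/-- For every `K ∈ ℕ` there is no sequence `(wₙ)` of ℝ-words over `X = {a, b}`
such that for every `n ≥ 1` the evaluation of `wₙ` equals `gₙ = ((n, 0), 0, 0)`
and `k(wₙ) ≤ K`, while `(ℓ(wₙ) − n)/n → 0` as `n → ∞`. -/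
theorem no_bounded_coarse_length_sequence (K : ℕ) :
    ¬ ∃ w : ℕ → List (Bool × ℝ),
        (∀ n : ℕ, 1 ≤ n → wordEval (w n) = ⟨(n : ℝ), 0, 0, 0⟩ ∧ (w n).length ≤ K) ∧
        Filter.Tendsto (fun n : ℕ => (wordLen (w n) - (n : ℝ)) / (n : ℝ))
          Filter.atTop (nhds 0) := by
  rintro ⟨w, hw, hlim⟩
  have hK : 0 < K := by
    refine (List.length_pos_iff.2 ?_).trans_le (hw 1 le_rfl).2
    rintro h
    simpa [h, wordEval_nil] using congrArg Engel.x (hw 1 le_rfl).1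
  have hbound : ∀ᶠ n : ℕ in Filter.atTop,
      min 1 (1 / (24 * (K : ℝ) ^ 3)) ≤ (wordLen (w n) - n) / n :=
    Filter.eventually_atTop.2
      ⟨1, fun n hn => min_le_excess_ratio (Nat.cast_pos.2 hn) (hw n hn).2 (hw n hn).1⟩
  have hpos : 0 < min 1 (1 / (24 * (K : ℝ) ^ 3)) := lt_min one_pos (by positivity)
  linarith [ge_of_tendsto hlim hbound]

end Engel
end
end

section
/- There exists a constant c > 0 such that for every integer n ≥ 1, every finite sequence of elements of {a¹, a⁻¹, b¹, b⁻¹} ⊂ Ē whose product equals gₙ = ((n, 0), 0, 0) has at least n + c·n^{1/3} terms. Equivalently, the word length of gₙ over the generating set X = {a^{±1}, b^{±1}} exceeds its Stoll length n by at least c·n^{1/3} (disproving Conjecture 6.5 of Breuillard and Le Donne). -/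
noncomputable section

/-! Read a word in `a^{±1}`, `b^{±1}` as a lattice path: its `k`-th letter is `((δₖ, εₖ), 0, 0)`
with `δₖ, εₖ = ±1`, and moves the height `yₖ = yₖ₋₁ + εₖ`. The quantity `B - x y² / 6` changes
at the `k`-th letter by `-δₖ (3 (yₖ₋₁ + yₖ)² + 1) / 24`, so for a word spelling `gₙ` the sum of
`(yₖ₋₁ + yₖ)²` over the `m` backward letters (`δₖ = -1`) exceeds the sum over the `n + m` forward
letters by `n / 3`. Each forward term is at least `1`, each backward term at most `(2H)²`, where
`H` is the largest `|yₖ|`, and climbing from level `h` to `h + 1` costs `(2h + 1)² ≥ (h + 1)³ - h³`.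
Hence `H³ ≤ 8 m H²` and `n ≤ 4 m H²`, so `n ≤ (8m)³`: the word has `n + 2m ≥ n + n^{1/3} / 4`
letters. -/

namespace Engel

def step (s : ℤˣ × ℤˣ) : Engel := ⟨(s.1 : ℤ), (s.2 : ℤ), 0, 0⟩

lemma mem_range_step_of_generator {g : Engel}
    (hg : g = aPow 1 ∨ g = (aPow 1)⁻¹ ∨ g = bPow 1 ∨ g = (bPow 1)⁻¹) :
    g ∈ Set.range step := by
  rcases hg with rfl | rfl | rfl | rfl
  exacts [⟨(1, 1), by ext <;> simp [step, aPow]⟩, ⟨(-1, -1), by ext <;> simp [step, aPow]⟩,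
    ⟨(1, -1), by ext <;> simp [step, bPow]⟩, ⟨(-1, 1), by ext <;> simp [step, bPow]⟩]

def moment (g : Engel) : ℝ := g.B - g.x * g.y ^ 2 / 6

lemma moment_mul_step (g : Engel) (s : ℤˣ × ℤˣ) :
    moment (g * step s) = moment g - s.1 * (3 * (2 * g.y + s.2) ^ 2 + 1) / 24 := by
  have hε : ((s.2 : ℤ) : ℝ) ^ 2 = 1 := by
    rw [← Int.cast_pow, ← Units.val_pow_eq_pow_val, Int.units_sq, Units.val_one, Int.cast_one]
  simp only [moment, step, mul_B, mul_x, mul_y, mul_zero, add_zero]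
  linear_combination (-((s.1 : ℤ) : ℝ) / 24) * hε

/-- For the lattice path of heights `y = y₀, y₁, …` with steps `yₖ = yₖ₋₁ + εₖ`, the sum of
`(yₖ₋₁ + yₖ)² = (2 yₖ₋₁ + εₖ)²` over the steps `(δₖ, εₖ)` with `δₖ = d`. -/
def midSqSum (d : ℤˣ) : ℤ → List (ℤˣ × ℤˣ) → ℤ
  | _, [] => 0
  | y, s :: w => (if s.1 = d then (2 * y + s.2) ^ 2 else 0) + midSqSum d (y + s.2) w

def maxHeight : ℤ → List (ℤˣ × ℤˣ) → ℤ
  | y, [] => |y|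
  | y, s :: w => max |y| (maxHeight (y + s.2) w)

lemma abs_le_maxHeight (y : ℤ) (w : List (ℤˣ × ℤˣ)) : |y| ≤ maxHeight y w := by
  cases w <;> simp [maxHeight]

lemma one_le_two_mul_add_unit_sq (y : ℤ) (e : ℤˣ) : 1 ≤ (2 * y + e) ^ 2 := by
  have hodd : 2 * y + e ≠ 0 := by rcases Int.units_eq_one_or e with rfl | rfl <;> simp <;> omega
  exact one_le_sq_iff_one_le_abs _ |>.mpr (Int.one_le_abs hodd)

/-- Climbing from level `|y|` to `|y| + 1` costs `(2|y| + 1)² ≥ (|y| + 1)³ - |y|³`. -/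
lemma abs_add_unit_cube_le (y : ℤ) (e : ℤˣ) : |y + e| ^ 3 ≤ |y| ^ 3 + (2 * y + e) ^ 2 := by
  rcases Int.units_eq_one_or e with rfl | rfl <;> rcases le_or_gt 0 y with hy | hy
  · rw [abs_of_nonneg hy, abs_of_nonneg (by simp; omega)]; push_cast; nlinarith
  · rw [abs_of_neg hy, abs_of_nonpos (by simp; omega)]; push_cast; nlinarith
  · rw [abs_of_nonneg hy]
    rcases hy.eq_or_lt with rfl | hy
    · norm_num
    · rw [abs_of_nonneg (by simp; omega)]; push_cast; nlinarith
  · rw [abs_of_neg hy, abs_of_neg (by simp; omega)]; push_cast; nlinarith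

lemma countP_le_midSqSum (d : ℤˣ) (y : ℤ) (w : List (ℤˣ × ℤˣ)) :
    (w.countP (·.1 = d) : ℤ) ≤ midSqSum d y w := by
  induction w generalizing y with
  | nil => simp [midSqSum]
  | cons s w ih =>
    have := ih (y + s.2)
    have := one_le_two_mul_add_unit_sq y s.2
    by_cases hd : s.1 = d <;> simp [midSqSum, hd] <;> linarith

lemma midSqSum_le (d : ℤˣ) (y : ℤ) (w : List (ℤˣ × ℤˣ)) :
    midSqSum d y w ≤ w.countP (·.1 = d) * (2 * maxHeight y w) ^ 2 := by
  induction w generalizing y with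
  | nil => simp [midSqSum]
  | cons s w ih =>
    set M := maxHeight (y + s.2) w
    have hM : |y + s.2| ≤ M := abs_le_maxHeight _ _
    have hmid : (2 * y + s.2) ^ 2 ≤ (2 * max |y| M) ^ 2 := by
      have hy := abs_le.mp (le_max_left |y| M)
      have hy' := abs_le.mp (hM.trans (le_max_right |y| M))
      exact sq_le_sq' (by linarith) (by linarith)
    have hmono : (2 * M) ^ 2 ≤ (2 * max |y| M) ^ 2 :=
      pow_le_pow_left₀ (by linarith [abs_nonneg (y + s.2)]) (by omega) 2
    have := ih (y + s.2)
    have : (0 : ℤ) ≤ w.countP (·.1 = d) := by positivity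
    by_cases hd : s.1 = d <;> simp [midSqSum, maxHeight, hd] <;> nlinarith

lemma maxHeight_cube_le (y : ℤ) (w : List (ℤˣ × ℤˣ)) :
    maxHeight y w ^ 3 ≤ |y| ^ 3 + (midSqSum 1 y w + midSqSum (-1) y w) := by
  induction w generalizing y with
  | nil => simp [midSqSum, maxHeight]
  | cons s w ih =>
    have hsplit : ((if s.1 = 1 then (2 * y + s.2) ^ 2 else 0) +
        if s.1 = -1 then (2 * y + s.2) ^ 2 else 0) = (2 * y + s.2) ^ 2 := by
      rcases Int.units_eq_one_or s.1 with h | h <;> simp [h]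
    have hclimb := abs_add_unit_cube_le y s.2
    have hfwd : 0 ≤ midSqSum 1 (y + s.2) w := (countP_le_midSqSum ..).trans' (by positivity)
    have hbwd : 0 ≤ midSqSum (-1) (y + s.2) w := (countP_le_midSqSum ..).trans' (by positivity)
    have := ih (y + s.2)
    simp only [maxHeight, midSqSum]
    rcases max_cases |y| (maxHeight (y + s.2) w) with ⟨h, -⟩ | ⟨h, -⟩ <;> rw [h] <;>
      nlinarith [sq_nonneg (2 * y + s.2)]

lemma length_eq_countP_add_countP (w : List (ℤˣ × ℤˣ)) :
    w.length = w.countP (·.1 = 1) + w.countP (·.1 = -1) := by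
  induction w with
  | nil => rfl
  | cons s w ih => rcases Int.units_eq_one_or s.1 with h | h <;> simp [h, ih] <;> ring

lemma x_prod_map_step (w : List (ℤˣ × ℤˣ)) :
    (w.map step).prod.x = ((w.countP (·.1 = 1) - w.countP (·.1 = -1) : ℤ) : ℝ) := by
  induction w with
  | nil => simp
  | cons s w ih =>
    rw [List.map_cons, List.prod_cons, mul_x, ih]
    rcases Int.units_eq_one_or s.1 with h | h <;> simp [step, h] <;> ring

lemma moment_mul_prod_map_step (g : Engel) (y : ℤ) (hy : g.y = y) (w : List (ℤˣ × ℤˣ)) :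
    24 * (moment g - moment (g * (w.map step).prod)) =
      ((3 * (midSqSum 1 y w - midSqSum (-1) y w) + w.countP (·.1 = 1) - w.countP (·.1 = -1) :
        ℤ) : ℝ) := by
  induction w generalizing g y with
  | nil => simp [midSqSum]
  | cons s w ih =>
    rw [List.map_cons, List.prod_cons, ← mul_assoc]
    have := ih (g * step s) (y + s.2) (by simp [hy, step])
    rw [moment_mul_step, hy] at *
    rcases Int.units_eq_one_or s.1 with h | h <;> simp [midSqSum, h] at * <;>
      linarith

theorem length_eq_and_le_cube_of_prod_eq {n : ℕ} {w : List (ℤˣ × ℤˣ)}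
    (hw : (w.map step).prod = ⟨n, 0, 0, 0⟩) :
    w.length = n + 2 * w.countP (·.1 = -1) ∧ (n : ℤ) ≤ (8 * w.countP (·.1 = -1)) ^ 3 := by
  have hx := x_prod_map_step w
  have hmoment := moment_mul_prod_map_step 1 0 (by simp) w
  rw [hw] at hx hmoment
  rw [one_mul] at hmoment
  dsimp only at hx
  have hlen := length_eq_countP_add_countP w
  have hfwd := countP_le_midSqSum 1 0 w
  have hbwd := midSqSum_le (-1) 0 w
  have hclimb := maxHeight_cube_le 0 w
  have hH0 := abs_le_maxHeight 0 w
  rw [abs_zero] at hclimb hH0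
  set p := w.countP (·.1 = 1)
  set m := w.countP (·.1 = -1)
  set H := maxHeight 0 w
  set Sf := midSqSum 1 0 w
  set Sb := midSqSum (-1) 0 w
  have hpm : (n : ℤ) = p - m := by exact_mod_cast hx
  have hS : 3 * (Sb - Sf) = n := by
    have : (0 : ℝ) = 3 * ((Sf : ℝ) - Sb) + p - m := by simpa [moment] using hmoment
    have : (0 : ℤ) = 3 * (Sf - Sb) + p - m := by exact_mod_cast this
    linarith
  refine ⟨by omega, ?_⟩
  rcases Nat.eq_zero_or_pos n with rfl | hn
  · positivity
  have hn' : (1 : ℤ) ≤ n := by exact_mod_cast hn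
  have hnS : (n : ℤ) ≤ Sb := by linarith
  have hH : 0 < H := by
    by_contra! h
    have : H = 0 := le_antisymm h hH0
    rw [this] at hbwd
    linarith
  have hH8 : H ≤ 8 * m := by
    by_contra! h
    nlinarith [mul_lt_mul_of_pos_right h (pow_pos hH 2)]
  nlinarith [pow_le_pow_left₀ hH.le hH8 2]

/-- There is `c > 0` such that for every integer `n ≥ 1`, every finite sequence of
elements of `{a¹, a⁻¹, b¹, b⁻¹} ⊂ Ē` whose product equals `gₙ = ((n, 0), 0, 0)`
has at least `n + c·n^{1/3}` terms: the word length of `gₙ` over `X = {a^{±1}, b^{±1}}`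
exceeds its Stoll length `n` by at least `c·n^{1/3}`. -/
theorem word_length_minus_stoll_length :
    ∃ c : ℝ, 0 < c ∧ ∀ n : ℕ, 1 ≤ n → ∀ L : List Engel,
      (∀ g ∈ L, g = aPow 1 ∨ g = (aPow 1)⁻¹ ∨ g = bPow 1 ∨ g = (bPow 1)⁻¹) →
      L.prod = ⟨(n : ℝ), 0, 0, 0⟩ →
      (n : ℝ) + c * (n : ℝ) ^ ((1 : ℝ) / 3) ≤ (L.length : ℝ) := by
  refine ⟨1 / 4, by norm_num, fun n _ L hL hprod => ?_⟩
  obtain ⟨w, rfl⟩ : L ∈ Set.range (List.map step) := by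
    rw [Set.range_list_map]
    exact fun g hg => mem_range_step_of_generator (hL g hg)
  obtain ⟨hlen, hcube⟩ := length_eq_and_le_cube_of_prod_eq hprod
  have hroot : (n : ℝ) ^ ((1 : ℝ) / 3) ≤ 8 * w.countP (·.1 = -1) := by
    rw [one_div, Real.rpow_inv_le_iff_of_pos (by positivity) (by positivity) (by norm_num)]
    exact_mod_cast hcube
  rw [List.length_map, hlen]
  push_cast
  linarith

end Engel
end
end
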